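/- For every positive integer t there exist constants α, β, γ > 0 such that the following holds: for all positive integers s and n ≥ 2, if G is a quasi-comparability graph of complexity t on n vertices that contains no clique of size s, then the chromatic number of G satisfies χ(G) ≤ α·s^β·(log n)^γ. -/

import Mathlib

/-!
Generalize to graphs with `u ~ v` iff `D u v ∨ D v u`, where `D u v` means `ρ u v ∧ x u ≺ y v`
for a transitive relation `ρ` (initially trivial) and coordinates replaced by their ranks,
integers below `2^L ≤ 4n`; then induct on the number of coordinates.

With no coordinates left, the graph is the comparability graph of `ρ`, coloured by Mirsky's
theorem. Otherwise let `[p·2^l, (p+1)·2^l)` be the smallest aligned dyadic interval containing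
`x u 0` and `y u 0`. For vertices of the same level `l`, `x u 0 < y v 0` holds when `u`'s prefix
`p` is smaller than `v`'s, fails when it is larger, and for equal prefixes holds exactly when both
vertices are forward (`x u 0 < y u 0`), since both then straddle the midpoint. So after splitting
by direction and level (`2(L+1)` classes) every remaining edge lies in one of two graphs of the
same kind with one coordinate fewer, `ρ` being strengthened by "same interval, both forward" or
by "same level, smaller prefix". Hence `f (k+1) = 2(L+1)·f k ^ 2`, and
`χ ≤ (2(L+1)·s)^(2^t) ≤ (8 s log₂ n)^(2^t)`.
-/

/-- The coordinate-wise strict partial order on `ℝ^t`. -/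
def PrecLT {t : ℕ} (x y : Fin t → ℝ) : Prop := ∀ i, x i < y i

/-- `G` is (isomorphic to) a quasi-comparability graph of complexity `t`: the vertices can be
identified with pairs `(x,y) ∈ ℝ^t × ℝ^t`, and `(x,y)`, `(x',y')` are adjacent iff
`x ≺ y'` or `x' ≺ y`. -/
def IsQuasiComp {V : Type} (G : SimpleGraph V) (t : ℕ) : Prop :=
  ∃ v : V → (Fin t → ℝ) × (Fin t → ℝ), Function.Injective v ∧
    ∀ x y : V, x ≠ y →
      (G.Adj x y ↔ PrecLT (v x).1 (v y).2 ∨ PrecLT (v y).1 (v x).2)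

open SimpleGraph Finset

/-- Mirsky's theorem: colour each element by its height. -/
theorem SimpleGraph.colorable_fromRel_lt {α : Type*} [Preorder α] {s : ℕ}
    (h : (fromRel ((· < ·) : α → α → Prop)).CliqueFree (s + 1)) :
    (fromRel ((· < ·) : α → α → Prop)).Colorable s := by
  classical
  have length_lt (p : LTSeries α) : p.length < s := by
    by_contra! hs
    refine h.mono (Nat.succ_le_succ hs) (univ.image p) ⟨?_, ?_⟩
    · rw [coe_image, coe_univ, Set.image_univ]
      rintro _ ⟨i, rfl⟩ _ ⟨j, rfl⟩ hij
      exact (fromRel_adj _ _ _).2 ⟨hij, (lt_or_gt_of_ne (ne_of_apply_ne p hij)).imp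
        (fun h => p.strictMono h) (fun h => p.strictMono h)⟩
    · rw [card_image_of_injective _ p.strictMono.injective, card_univ, Fintype.card_fin]
  have height_eq (a : α) : ∃ m < s, Order.height a = m := by
    have hs : 0 < s := length_lt (RelSeries.singleton _ a)
    have hle : Order.height a ≤ (s - 1 : ℕ) := Order.height_le fun p _ => by
      have := length_lt p
      exact_mod_cast (by omega : p.length ≤ s - 1)
    obtain ⟨m, hm⟩ :=
      ENat.ne_top_iff_exists.mp (ne_top_of_le_ne_top (ENat.natCast_ne_top _) hle)
    rw [← hm, Nat.cast_le] at hle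
    exact ⟨m, by omega, hm.symm⟩
  choose c hc hheight using height_eq
  have c_strictMono {a b : α} (h : a < b) : c a < c b := by
    have := Order.height_add_one_le h
    rw [hheight, hheight] at this
    exact_mod_cast this
  refine ⟨Coloring.mk (fun a => ⟨c a, hc a⟩) fun {a b} hab heq => ?_⟩
  rw [Fin.mk.injEq] at heq
  rcases ((fromRel_adj _ a b).1 hab).2 with h | h
  · exact (c_strictMono h).ne heq
  · exact (c_strictMono h).ne' heq

theorem SimpleGraph.colorable_fromRel_of_isTrans {V : Type*} {r : V → V → Prop} [IsTrans V r]
    {s : ℕ} (h : (fromRel r).CliqueFree (s + 1)) : (fromRel r).Colorable s := by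
  -- Breaking ties between mutually related vertices by a well-order gives a strict order with
  -- the same comparability graph.
  let lt (u v : V) : Prop := r u v ∧ (r v u → WellOrderingRel u v)
  have : IsStrictOrder V lt :=
    { irrefl := fun u h => irrefl_of WellOrderingRel u (h.2 h.1)
      trans := fun u v w huv hvw => ⟨_root_.trans huv.1 hvw.1, fun hwu =>
        _root_.trans (huv.2 (_root_.trans hvw.1 hwu)) (hvw.2 (_root_.trans hwu huv.1))⟩ }
  let := partialOrderOfSO lt
  have fromRel_eq : fromRel r = fromRel ((· < ·) : V → V → Prop) := by
    ext u v
    simp only [fromRel_adj, and_congr_right_iff]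
    intro huv
    show _ ↔ lt u v ∨ lt v u
    rcases trichotomous_of WellOrderingRel u v with h | rfl | h
    · tauto
    · exact absurd rfl huv
    · tauto
  rw [fromRel_eq] at h ⊢
  exact colorable_fromRel_lt h

theorem SimpleGraph.fromRel_mono {V : Type*} {r r' : V → V → Prop}
    (h : ∀ u v, r u v → r' u v) : fromRel r ≤ fromRel r' := fun u v huv =>
  (fromRel_adj _ _ _).2 ⟨huv.1, huv.2.imp (h u v) (h v u)⟩

theorem Nat.exists_div_two_pow_eq (a b : ℕ) : ∃ l, a / 2 ^ l = b / 2 ^ l :=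
  ⟨a + b, by
    rw [Nat.div_eq_of_lt (Nat.lt_two_pow_self.trans_le (Nat.pow_le_pow_right two_pos (by omega))),
      Nat.div_eq_of_lt (Nat.lt_two_pow_self.trans_le (Nat.pow_le_pow_right two_pos (by omega)))]⟩

/- `[p·2^l, (p+1)·2^l)` with `l = dyadicLevel a b` and `p = dyadicPrefix a b` is the smallest
aligned dyadic interval containing `a` and `b`, and `dyadicMid a b` is its midpoint. -/
def dyadicLevel (a b : ℕ) : ℕ := Nat.find (Nat.exists_div_two_pow_eq a b)

def dyadicPrefix (a b : ℕ) : ℕ := a / 2 ^ dyadicLevel a b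

def dyadicMid (a b : ℕ) : ℕ := (2 * dyadicPrefix a b + 1) * 2 ^ (dyadicLevel a b - 1)

section Dyadic

variable {a b a' b' : ℕ}

theorem dyadicPrefix_eq_div_right : dyadicPrefix a b = b / 2 ^ dyadicLevel a b :=
  Nat.find_spec (Nat.exists_div_two_pow_eq a b)

theorem dyadicLevel_le {L : ℕ} (ha : a < 2 ^ L) (hb : b < 2 ^ L) : dyadicLevel a b ≤ L :=
  Nat.find_le (by rw [Nat.div_eq_of_lt ha, Nat.div_eq_of_lt hb])

theorem dyadicLevel_eq_zero_iff : dyadicLevel a b = 0 ↔ a = b := by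
  simp [dyadicLevel, Nat.find_eq_zero]

theorem lt_dyadicMid_iff_dyadicMid_le (h : a ≠ b) :
    a < dyadicMid a b ↔ dyadicMid a b ≤ b := by
  obtain ⟨l, hl⟩ := Nat.exists_eq_add_one_of_ne_zero (mt dyadicLevel_eq_zero_iff.1 h)
  have hsplit : a / 2 ^ l ≠ b / 2 ^ l :=
    Nat.find_min (Nat.exists_div_two_pow_eq a b) (by rw [dyadicLevel] at hl; omega)
  have ha : a / 2 ^ l / 2 = dyadicPrefix a b := by
    rw [dyadicPrefix, hl, Nat.div_div_eq_div_mul, pow_succ]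
  have hb : b / 2 ^ l / 2 = dyadicPrefix a b := by
    rw [dyadicPrefix_eq_div_right, hl, Nat.div_div_eq_div_mul, pow_succ]
  rw [dyadicMid, hl, Nat.add_sub_cancel, ← Nat.div_lt_iff_lt_mul (by positivity),
    ← Nat.le_div_iff_mul_le (by positivity)]
  omega

theorem dyadicMid_mem_Ioc (h : a ≠ b) : dyadicMid a b ∈ Set.Ioc (min a b) (max a b) := by
  have := lt_dyadicMid_iff_dyadicMid_le h
  rw [Set.mem_Ioc]
  omega

theorem dyadicMid_congr (hl : dyadicLevel a b = dyadicLevel a' b')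
    (hp : dyadicPrefix a b = dyadicPrefix a' b') : dyadicMid a b = dyadicMid a' b' := by
  rw [dyadicMid, dyadicMid, hl, hp]

theorem lt_of_dyadicLevel_eq_of_dyadicPrefix_eq (hab : a < b) (hab' : a' < b')
    (hl : dyadicLevel a b = dyadicLevel a' b') (hp : dyadicPrefix a b = dyadicPrefix a' b') :
    a < b' := by
  obtain ⟨h₁, -⟩ := dyadicMid_mem_Ioc hab.ne
  obtain ⟨-, h₂⟩ := dyadicMid_mem_Ioc hab'.ne
  have := dyadicMid_congr hl hp
  omega

theorem le_of_dyadicLevel_eq_of_dyadicPrefix_eq (hba : b ≤ a) (hba' : b' ≤ a')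
    (hl : dyadicLevel a b = dyadicLevel a' b') (hp : dyadicPrefix a b = dyadicPrefix a' b') :
    b' ≤ a := by
  rcases hba'.lt_or_eq with hlt | rfl
  · have hne : a ≠ b :=
      mt dyadicLevel_eq_zero_iff.2 (hl ▸ mt dyadicLevel_eq_zero_iff.1 hlt.ne')
    obtain ⟨-, h₁⟩ := dyadicMid_mem_Ioc hne
    obtain ⟨h₂, -⟩ := dyadicMid_mem_Ioc hlt.ne'
    have := dyadicMid_congr hl hp
    omega
  · obtain rfl : a = b := dyadicLevel_eq_zero_iff.1 (hl.trans (dyadicLevel_eq_zero_iff.2 rfl))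
    simp only [dyadicPrefix, dyadicLevel_eq_zero_iff.2 rfl, pow_zero, Nat.div_one] at hp
    omega

theorem dyadicPrefix_le_of_lt (hl : dyadicLevel a b = dyadicLevel a' b') (h : a < b') :
    dyadicPrefix a b ≤ dyadicPrefix a' b' := by
  rw [dyadicPrefix, dyadicPrefix_eq_div_right, ← hl]
  exact Nat.div_le_div_right h.le

theorem lt_of_dyadicPrefix_lt (hl : dyadicLevel a b = dyadicLevel a' b')
    (h : dyadicPrefix a b < dyadicPrefix a' b') : a < b' := by
  rw [dyadicPrefix, dyadicPrefix_eq_div_right, ← hl] at h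
  exact Nat.lt_of_div_lt_div h

theorem dyadicPrefix_cases_of_lt (hl : dyadicLevel a b = dyadicLevel a' b')
    (hdir : a < b ↔ a' < b') (h : a < b') :
    (a < b ∧ a' < b' ∧ dyadicPrefix a b = dyadicPrefix a' b') ∨
      dyadicPrefix a b < dyadicPrefix a' b' := by
  rcases (dyadicPrefix_le_of_lt hl h).lt_or_eq with hp | hp
  · exact Or.inr hp
  · by_cases hab : a < b
    · exact Or.inl ⟨hab, hdir.1 hab, hp⟩
    · have :=
        le_of_dyadicLevel_eq_of_dyadicPrefix_eq (not_lt.1 hab) (not_lt.1 (mt hdir.2 hab)) hl hp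
      omega

end Dyadic

def quasiCompGraph {V β : Type*} [LT β] {k : ℕ} (ρ : V → V → Prop)
    (x y : V → Fin k → β) : SimpleGraph V :=
  fromRel fun u v => ρ u v ∧ ∀ i, x u i < y v i

theorem quasiCompGraph_colorable_succ {V : Type*} {k L m : ℕ} (ρ : V → V → Prop)
    [IsTrans V ρ] (x y : V → Fin (k + 1) → ℕ) (hx : ∀ u, x u 0 < 2 ^ L) (hy : ∀ u, y u 0 < 2 ^ L)
    (ih : ∀ (ρ' : V → V → Prop) [IsTrans V ρ'],
      quasiCompGraph ρ' (fun u => Fin.tail (x u)) (fun u => Fin.tail (y u)) ≤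
        quasiCompGraph ρ x y →
      (quasiCompGraph ρ' (fun u => Fin.tail (x u)) (fun u => Fin.tail (y u))).Colorable m) :
    (quasiCompGraph ρ x y).Colorable (2 * (L + 1) * m ^ 2) := by
  classical
  set lev : V → ℕ := fun u => dyadicLevel (x u 0) (y u 0)
  set pre : V → ℕ := fun u => dyadicPrefix (x u 0) (y u 0)
  set ρ₁ : V → V → Prop := fun u v =>
    ρ u v ∧ x u 0 < y u 0 ∧ x v 0 < y v 0 ∧ lev u = lev v ∧ pre u = pre v
  set ρ₂ : V → V → Prop := fun u v => ρ u v ∧ lev u = lev v ∧ pre u < pre v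
  have : IsTrans V ρ₁ := ⟨fun u v w h₁ h₂ =>
    ⟨_root_.trans h₁.1 h₂.1, h₁.2.1, h₂.2.2.1, h₁.2.2.2.1.trans h₂.2.2.2.1,
      h₁.2.2.2.2.trans h₂.2.2.2.2⟩⟩
  have : IsTrans V ρ₂ := ⟨fun u v w h₁ h₂ =>
    ⟨_root_.trans h₁.1 h₂.1, h₁.2.1.trans h₂.2.1, h₁.2.2.trans h₂.2.2⟩⟩
  have lt_iff (u v : V) : (∀ i, x u i < y v i) ↔
      x u 0 < y v 0 ∧ ∀ i, Fin.tail (x u) i < Fin.tail (y v) i :=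
    Fin.forall_fin_succ
  obtain ⟨C₁⟩ := ih ρ₁ <| fromRel_mono fun u v ⟨⟨hρ, hu, hv, hl, hp⟩, ht⟩ =>
    ⟨hρ, (lt_iff u v).2 ⟨lt_of_dyadicLevel_eq_of_dyadicPrefix_eq hu hv hl hp, ht⟩⟩
  obtain ⟨C₂⟩ := ih ρ₂ <| fromRel_mono fun u v ⟨⟨hρ, hl, hp⟩, ht⟩ =>
    ⟨hρ, (lt_iff u v).2 ⟨lt_of_dyadicPrefix_lt hl hp, ht⟩⟩
  let colour (u : V) : Bool × Fin (L + 1) × Fin m × Fin m :=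
    (decide (x u 0 < y u 0), ⟨lev u, Nat.lt_succ_of_le (dyadicLevel_le (hx u) (hy u))⟩,
      C₁ u, C₂ u)
  have colour_ne {u v : V} (huv : u ≠ v) (hρ : ρ u v) (hlt : ∀ i, x u i < y v i) :
      colour u ≠ colour v := by
    intro heq
    simp only [colour, Prod.mk.injEq, Fin.mk.injEq, decide_eq_decide] at heq
    obtain ⟨hdir, hl, h₁, h₂⟩ := heq
    obtain ⟨h0, ht⟩ := (lt_iff u v).1 hlt
    rcases dyadicPrefix_cases_of_lt hl hdir h0 with ⟨hu, hv, hp⟩ | hp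
    · exact C₁.valid ((fromRel_adj _ _ _).2 ⟨huv, .inl ⟨⟨hρ, hu, hv, hl, hp⟩, ht⟩⟩) h₁
    · exact C₂.valid ((fromRel_adj _ _ _).2 ⟨huv, .inl ⟨⟨hρ, hl, hp⟩, ht⟩⟩) h₂
  refine (Coloring.mk colour fun {u v} huv => ?_).colorable.mono (by simp [sq, mul_assoc])
  obtain ⟨hne, ⟨hρ, hlt⟩ | ⟨hρ, hlt⟩⟩ := (fromRel_adj _ _ _).1 huv
  · exact colour_ne hne hρ hlt
  · exact (colour_ne hne.symm hρ hlt).symm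

def colourBound (c s : ℕ) : ℕ → ℕ
  | 0 => s
  | k + 1 => c * colourBound c s k ^ 2

theorem mul_colourBound (c s k : ℕ) : c * colourBound c s k = (c * s) ^ 2 ^ k := by
  induction k with
  | zero => simp [colourBound]
  | succ k ih => rw [colourBound, pow_succ 2 k, pow_mul, ← ih]; ring

theorem colourBound_le {c : ℕ} (hc : 1 ≤ c) (s k : ℕ) :
    colourBound c s k ≤ (c * s) ^ 2 ^ k :=
  mul_colourBound c s k ▸ Nat.le_mul_of_pos_left _ hc

theorem quasiCompGraph_colorable {V : Type*} {L s k : ℕ} (ρ : V → V → Prop) [IsTrans V ρ]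
    (x y : V → Fin k → ℕ) (hx : ∀ u i, x u i < 2 ^ L) (hy : ∀ u i, y u i < 2 ^ L)
    (h : (quasiCompGraph ρ x y).CliqueFree s) :
    (quasiCompGraph ρ x y).Colorable (colourBound (2 * (L + 1)) s k) := by
  induction k generalizing ρ with
  | zero =>
    have : quasiCompGraph ρ x y = fromRel ρ := by simp [quasiCompGraph]
    rw [this] at h ⊢
    exact colorable_fromRel_of_isTrans (h.mono s.le_succ)
  | succ k ih =>
    exact quasiCompGraph_colorable_succ ρ x y (hx · 0) (hy · 0) fun ρ' _ hle =>
      ih ρ' _ _ (fun u i => hx u i.succ) (fun u i => hy u i.succ) (h.anti hle)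

theorem Finset.card_filter_lt_lt_card_filter_lt_iff {α : Type*} [LinearOrder α] {S : Finset α}
    {a : α} (ha : a ∈ S) (b : α) : #{c ∈ S | c < a} < #{c ∈ S | c < b} ↔ a < b := by
  constructor
  · intro h
    by_contra! hba
    exact h.not_ge (card_le_card (monotone_filter_right S fun _ _ hc => hc.trans_le hba))
  · intro hab
    refine card_lt_card ⟨monotone_filter_right S fun _ _ hc => hc.trans hab, fun hsub => ?_⟩
    exact lt_irrefl a (mem_filter.1 (hsub (mem_filter.2 ⟨ha, hab⟩))).2

theorem exists_nat_quasiCompGraph_eq {V β : Type*} [Fintype V] [LinearOrder β] {k : ℕ}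
    (ρ : V → V → Prop) (x y : V → Fin k → β) :
    ∃ x' y' : V → Fin k → ℕ, (∀ u i, x' u i < 2 * Fintype.card V) ∧
      (∀ u i, y' u i < 2 * Fintype.card V) ∧
      quasiCompGraph ρ x' y' = quasiCompGraph ρ x y := by
  classical
  let S (i : Fin k) : Finset β := univ.image (x · i) ∪ univ.image (y · i)
  let rank (i : Fin k) (c : β) : ℕ := #{d ∈ S i | d < c}
  have rank_lt {i : Fin k} {c : β} (hc : c ∈ S i) : rank i c < 2 * Fintype.card V := by
    calc rank i c < #(S i) := card_lt_card (filter_ssubset.2 ⟨c, hc, lt_irrefl c⟩)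
      _ ≤ #(univ.image (x · i)) + #(univ.image (y · i)) := card_union_le _ _
      _ ≤ 2 * Fintype.card V := by
        have := card_image_le (s := univ) (f := (x · i))
        have := card_image_le (s := univ) (f := (y · i))
        rw [card_univ] at *
        omega
  have hxS (u : V) (i : Fin k) : x u i ∈ S i := mem_union_left _ (mem_image_of_mem _ (mem_univ u))
  have hyS (u : V) (i : Fin k) : y u i ∈ S i :=
    mem_union_right _ (mem_image_of_mem _ (mem_univ u))
  refine ⟨fun u i => rank i (x u i), fun u i => rank i (y u i), fun u i => rank_lt (hxS u i),
    fun u i => rank_lt (hyS u i), ?_⟩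
  simp only [quasiCompGraph, card_filter_lt_lt_card_filter_lt_iff (hxS _ _), rank]

theorem IsQuasiComp.exists_eq_quasiCompGraph {V : Type} {G : SimpleGraph V} {t : ℕ}
    (h : IsQuasiComp G t) :
    ∃ x y : V → Fin t → ℝ, G = quasiCompGraph (fun _ _ => True) x y := by
  obtain ⟨v, -, hv⟩ := h
  refine ⟨fun u => (v u).1, fun u => (v u).2, ?_⟩
  ext u w
  by_cases huw : u = w
  · simp [huw]
  · simp [quasiCompGraph, hv u w huw, huw, PrecLT]

theorem colourBound_le_logb {n : ℕ} (hn : 2 ≤ n) (s k : ℕ) :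
    (colourBound (2 * (Nat.log 2 n + 2 + 1)) s k : ℝ) ≤
      8 ^ 2 ^ k * s ^ 2 ^ k * Real.logb 2 n ^ 2 ^ k := by
  have hc : (2 * (Nat.log 2 n + 2 + 1) : ℝ) ≤ 8 * Real.logb 2 n := by
    have h₁ : (1 : ℝ) ≤ Nat.log 2 n := by exact_mod_cast Nat.log_pos one_lt_two hn
    have h₂ := Real.natLog_le_logb n 2
    push_cast at h₁ h₂
    linarith
  calc (colourBound (2 * (Nat.log 2 n + 2 + 1)) s k : ℝ)
      ≤ ((2 * (Nat.log 2 n + 2 + 1) * s : ℕ) : ℝ) ^ 2 ^ k := by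
        exact_mod_cast colourBound_le (by omega) s k
    _ ≤ (8 * Real.logb 2 n * s) ^ 2 ^ k := by
        push_cast
        gcongr
    _ = 8 ^ 2 ^ k * s ^ 2 ^ k * Real.logb 2 n ^ 2 ^ k := by ring

theorem stmt5_general (t : ℕ) :
    ∃ α β γ : ℝ, 0 < α ∧ 0 < β ∧ 0 < γ ∧
      ∀ (s n : ℕ), 0 < s → 2 ≤ n →
        ∀ (V : Type) [Fintype V] (G : SimpleGraph V),
          Fintype.card V = n → IsQuasiComp G t → G.CliqueFree s →
          ∃ m : ℕ, G.chromaticNumber ≤ (m : ℕ∞) ∧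
            (m : ℝ) ≤ α * (s : ℝ) ^ β * (Real.logb 2 n) ^ γ := by
  refine ⟨8 ^ 2 ^ t, (2 ^ t : ℕ), (2 ^ t : ℕ), by positivity, by positivity, by positivity,
    ?_⟩
  intro s n _ hn V _ G hcard hG hfree
  obtain ⟨x₀, y₀, rfl⟩ := hG.exists_eq_quasiCompGraph
  obtain ⟨x, y, hx, hy, hxy⟩ := exists_nat_quasiCompGraph_eq _ x₀ y₀
  set L := Nat.log 2 n + 2
  have hnL : 2 * n ≤ 2 ^ L := by
    have := Nat.lt_pow_succ_log_self one_lt_two n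
    rw [pow_succ]; omega
  rw [← hxy] at hfree ⊢
  have : IsTrans V fun _ _ => True := ⟨fun _ _ _ _ _ => trivial⟩
  have hcol := quasiCompGraph_colorable (L := L) _ x y (fun u i => by have := hx u i; omega)
    (fun u i => by have := hy u i; omega) hfree
  refine ⟨_, hcol.chromaticNumber_le, ?_⟩
  rw [Real.rpow_natCast, Real.rpow_natCast]
  exact colourBound_le_logb hn s t

/-- For every positive integer `t` there are constants `α, β, γ > 0` such that every
quasi-comparability graph of complexity `t` on `n ≥ 2` vertices with no clique of size `s` has
chromatic number at most `α·s^β·(log₂ n)^γ`. -/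
theorem stmt5 (t : ℕ) (ht : 0 < t) :
    ∃ α β γ : ℝ, 0 < α ∧ 0 < β ∧ 0 < γ ∧
      ∀ (s n : ℕ), 0 < s → 2 ≤ n →
        ∀ (V : Type) [Fintype V] (G : SimpleGraph V),
          Fintype.card V = n → IsQuasiComp G t → G.CliqueFree s →
          ∃ m : ℕ, G.chromaticNumber ≤ (m : ℕ∞) ∧
            (m : ℝ) ≤ α * (s : ℝ) ^ β * (Real.logb 2 n) ^ γ :=
  stmt5_general t
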